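/- Let k ∈ L¹(ℝᵈ) be even, strictly positive almost everywhere, with ∫ k = 1, let H be the associated RKHS, and let (X, Y) be a random pair in ℝᵈ × ℝ with E[Y²] < ∞. Define 𝒥(β, λ) := inf_{f ∈ H} ( E[(Y − f(β ∘ X))²] + λ‖f‖²_H ). Then for every λ > 0, the map β ↦ 𝒥(β, λ) is continuous on ℝᵈ. -/

import Mathlib

open MeasureTheory Real

/-- The compositional kernel ridge regression objective
`𝒥(β, λ) = inf_{f ∈ H} E[(Y − f(β ∘ X))²] + λ‖f‖²_H`, where members of the RKHS `H`
are parametrized by their Fourier transforms `g`. -/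
noncomputable def Jobj {d : ℕ} {Ω : Type} [MeasureSpace Ω]
    (k : (Fin d → ℝ) → ℝ) (X : Ω → Fin d → ℝ) (Y : Ω → ℝ)
    (β : Fin d → ℝ) (lam : ℝ) : ℝ :=
  sInf {r : ℝ | ∃ g : (Fin d → ℝ) → ℂ,
    Integrable g volume ∧
    (∀ ω, g (-ω) = starRingEnd ℂ (g ω)) ∧
    Integrable (fun ω : Fin d → ℝ => ‖g ω‖ ^ 2 / k ω) volume ∧
    r = (∫ p, (Y p - (∫ ω : Fin d → ℝ, g ω *
            Complex.exp (2 * π * Complex.I *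
              ((∑ j, (β j * X p j) * ω j : ℝ) : ℂ))).re) ^ 2 ∂volume)
        + lam * ∫ ω : Fin d → ℝ, ‖g ω‖ ^ 2 / k ω}

/-!
Only `g` with `λ‖g‖²_H ≤ E[Y²]` matter in the infimum, since `g = 0` already attains `E[Y²]`.
On this ball, AM–GM against the weight `k` bounds `∫ |g|` and makes the tails `∫_{|ω|>R} |g|`
uniformly small, so the features `f_g = Re ∫ g(ω) e^{2πi⟨·,ω⟩} dω` are uniformly bounded and
uniformly equicontinuous. Hence the risks `β ↦ E[(Y − f_g(β ∘ X))²]` form an equicontinuous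
family, and the infimum of an equicontinuous family is continuous.
-/

open Filter Topology Set

section FourierFeatures

variable {d : ℕ}

noncomputable def fourierKernel (z ω : Fin d → ℝ) : ℂ :=
  Complex.exp (2 * π * Complex.I * ((∑ j, z j * ω j : ℝ) : ℂ))

noncomputable def fourierRe (g : (Fin d → ℝ) → ℂ) (z : Fin d → ℝ) : ℝ :=
  (∫ ω, g ω * fourierKernel z ω).re

lemma norm_exp_two_pi_I_mul_ofReal (a : ℝ) : ‖Complex.exp (2 * π * Complex.I * a)‖ = 1 := by
  rw [show 2 * π * Complex.I * a = ((2 * π * a : ℝ) : ℂ) * Complex.I by push_cast; ring,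
    Complex.norm_exp_ofReal_mul_I]

lemma norm_exp_two_pi_I_mul_ofReal_sub_le (a b : ℝ) :
    ‖Complex.exp (2 * π * Complex.I * a) - Complex.exp (2 * π * Complex.I * b)‖ ≤
      2 * π * |a - b| := by
  have hfactor : Complex.exp (2 * π * Complex.I * a) - Complex.exp (2 * π * Complex.I * b) =
      Complex.exp (2 * π * Complex.I * b) *
        (Complex.exp (Complex.I * ((2 * π * (a - b) : ℝ) : ℂ)) - 1) := by
    rw [mul_sub, ← Complex.exp_add]
    push_cast
    ring_nf
  rw [hfactor, norm_mul, norm_exp_two_pi_I_mul_ofReal, one_mul]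
  refine Real.norm_exp_I_mul_ofReal_sub_one_le.trans_eq ?_
  rw [Real.norm_eq_abs, abs_mul, abs_of_pos (by positivity : (0 : ℝ) < 2 * π)]

lemma abs_sum_mul_le (z ω : Fin d → ℝ) : |∑ j, z j * ω j| ≤ d * ‖z‖ * ‖ω‖ := by
  calc |∑ j, z j * ω j| ≤ ∑ j, ‖z j‖ * ‖ω j‖ := by
        simpa only [abs_mul, Real.norm_eq_abs] using
          Finset.abs_sum_le_sum_abs (fun j => z j * ω j) Finset.univ
    _ ≤ ∑ _j : Fin d, ‖z‖ * ‖ω‖ := by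
        gcongr with j
        exacts [norm_le_pi_norm z j, norm_le_pi_norm ω j]
    _ = d * ‖z‖ * ‖ω‖ := by simp [mul_assoc]

lemma norm_fourierKernel (z ω : Fin d → ℝ) : ‖fourierKernel z ω‖ = 1 :=
  norm_exp_two_pi_I_mul_ofReal _

lemma norm_fourierKernel_sub_le (z z' ω : Fin d → ℝ) :
    ‖fourierKernel z ω - fourierKernel z' ω‖ ≤ 2 * π * (d * ‖z - z'‖ * ‖ω‖) := by
  refine (norm_exp_two_pi_I_mul_ofReal_sub_le _ _).trans ?_
  gcongr
  simpa only [Pi.sub_apply, sub_mul, Finset.sum_sub_distrib] using abs_sum_mul_le (z - z') ω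

lemma continuous_fourierKernel (z : Fin d → ℝ) : Continuous (fourierKernel z) := by
  unfold fourierKernel
  fun_prop

lemma MeasureTheory.Integrable.mul_fourierKernel {g : (Fin d → ℝ) → ℂ} (hg : Integrable g)
    (z : Fin d → ℝ) : Integrable fun ω => g ω * fourierKernel z ω :=
  hg.mul_bdd (continuous_fourierKernel z).aestronglyMeasurable
    (Eventually.of_forall fun ω => (norm_fourierKernel z ω).le)

lemma abs_fourierRe_le (g : (Fin d → ℝ) → ℂ) (z : Fin d → ℝ) :
    |fourierRe g z| ≤ ∫ ω, ‖g ω‖ :=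
  (Complex.abs_re_le_norm _).trans <| (norm_integral_le_integral_norm _).trans_eq <| by
    simp_rw [norm_mul, norm_fourierKernel, mul_one]

lemma abs_fourierRe_sub_le {g : (Fin d → ℝ) → ℂ} (hg : Integrable g) {R : ℝ} (hR : 0 ≤ R)
    (z z' : Fin d → ℝ) :
    |fourierRe g z - fourierRe g z'| ≤
      2 * π * d * R * ‖z - z'‖ * (∫ ω, ‖g ω‖) + 2 * ∫ ω in {ω | R < ‖ω‖}, ‖g ω‖ := by
  set S := {ω : Fin d → ℝ | R < ‖ω‖}
  have hS : MeasurableSet S := measurableSet_lt measurable_const measurable_norm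
  set c := 2 * π * d * R * ‖z - z'‖
  have hc : 0 ≤ c := by positivity
  have hpt : ∀ ω, ‖g ω * fourierKernel z ω - g ω * fourierKernel z' ω‖ ≤
      c * ‖g ω‖ + 2 * S.indicator (fun ω => ‖g ω‖) ω := by
    intro ω
    rw [← mul_sub, norm_mul, mul_comm c]
    by_cases hω : ω ∈ S
    · have h2 : ‖fourierKernel z ω - fourierKernel z' ω‖ ≤ 2 := by
        refine (norm_sub_le _ _).trans ?_
        rw [norm_fourierKernel, norm_fourierKernel]
        norm_num
      rw [indicator_of_mem hω]
      nlinarith [norm_nonneg (g ω)]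
    · rw [indicator_of_notMem hω, mul_zero, add_zero]
      gcongr
      calc ‖fourierKernel z ω - fourierKernel z' ω‖ ≤ 2 * π * (d * ‖z - z'‖ * ‖ω‖) :=
            norm_fourierKernel_sub_le z z' ω
        _ ≤ 2 * π * (d * ‖z - z'‖ * R) := by gcongr; exact not_lt.1 hω
        _ = c := by ring
  have hint := (hg.mul_fourierKernel z).sub (hg.mul_fourierKernel z')
  calc |fourierRe g z - fourierRe g z'|
      = |(∫ ω, (g ω * fourierKernel z ω - g ω * fourierKernel z' ω)).re| := by
        rw [integral_sub (hg.mul_fourierKernel z) (hg.mul_fourierKernel z'), Complex.sub_re]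
        rfl
    _ ≤ ∫ ω, ‖g ω * fourierKernel z ω - g ω * fourierKernel z' ω‖ :=
        (Complex.abs_re_le_norm _).trans (norm_integral_le_integral_norm _)
    _ ≤ ∫ ω, (c * ‖g ω‖ + 2 * S.indicator (fun ω => ‖g ω‖) ω) :=
        integral_mono hint.norm
          ((hg.norm.const_mul c).add ((hg.norm.indicator hS).const_mul 2)) hpt
    _ = c * (∫ ω, ‖g ω‖) + 2 * ∫ ω in S, ‖g ω‖ := by
        rw [integral_add (hg.norm.const_mul c) ((hg.norm.indicator hS).const_mul 2),
          integral_const_mul, integral_const_mul, integral_indicator hS]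

end FourierFeatures

section WeightedIntegrals

variable {α : Type*} [MeasurableSpace α] {μ : Measure α}

lemma le_half_mul_sq_div_add_div {a κ t : ℝ} (hκ : 0 < κ) (ht : 0 < t) :
    a ≤ (t * (a ^ 2 / κ) + κ / t) / 2 := by
  have hgap : t * (a ^ 2 / κ) + κ / t - 2 * a = (t * a - κ) ^ 2 / (t * κ) := by
    field_simp
    ring
  have : 0 ≤ (t * a - κ) ^ 2 / (t * κ) := by positivity
  linarith

lemma setIntegral_norm_le_of_integrable_sq_div {E : Type*} [NormedAddCommGroup E]
    {k : α → ℝ} {g : α → E} (hk : Integrable k μ) (hk_pos : ∀ᵐ ω ∂μ, 0 < k ω)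
    (hgk : Integrable (fun ω => ‖g ω‖ ^ 2 / k ω) μ) (s : Set α) {t : ℝ} (ht : 0 < t) :
    ∫ ω in s, ‖g ω‖ ∂μ ≤ (t * (∫ ω, ‖g ω‖ ^ 2 / k ω ∂μ) + (∫ ω in s, k ω ∂μ) / t) / 2 := by
  have hq : 0 ≤ᵐ[μ] fun ω => ‖g ω‖ ^ 2 / k ω := by
    filter_upwards [hk_pos] with ω hω using div_nonneg (sq_nonneg _) hω.le
  calc ∫ ω in s, ‖g ω‖ ∂μ ≤ ∫ ω in s, (t * (‖g ω‖ ^ 2 / k ω) + k ω / t) / 2 ∂μ := by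
        refine integral_mono_of_nonneg (Eventually.of_forall fun ω => norm_nonneg _)
          (((hgk.const_mul t).add (hk.div_const t)).div_const 2).integrableOn ?_
        filter_upwards [ae_restrict_of_ae hk_pos] with ω hω
        exact le_half_mul_sq_div_add_div hω ht
    _ = (t * (∫ ω in s, ‖g ω‖ ^ 2 / k ω ∂μ) + (∫ ω in s, k ω ∂μ) / t) / 2 := by
        rw [integral_div, integral_add (hgk.const_mul t).integrableOn
          (hk.div_const t).integrableOn, integral_const_mul, integral_div]
    _ ≤ (t * (∫ ω, ‖g ω‖ ^ 2 / k ω ∂μ) + (∫ ω in s, k ω ∂μ) / t) / 2 := by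
        have := mul_le_mul_of_nonneg_left (setIntegral_le_integral (s := s) hgk hq) ht.le
        linarith

lemma MeasureTheory.Integrable.tendsto_setIntegral_lt {E : Type*} [NormedAddCommGroup E]
    [NormedSpace ℝ E] {f : α → E} (hf : Integrable f μ) {ρ : α → ℝ} (hρ : Measurable ρ) :
    Tendsto (fun T : ℝ => ∫ x in {x | T < ρ x}, f x ∂μ) atTop (𝓝 0) := by
  have h := tendsto_setIntegral_of_antitone (μ := μ) (f := f) (s := fun T : ℝ => {x | T < ρ x})
    (fun T => measurableSet_lt measurable_const hρ)
    (fun T T' hTT' x hx => lt_of_le_of_lt hTT' hx) ⟨0, hf.integrableOn⟩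
  have hempty : ⋂ T : ℝ, {x | T < ρ x} = ∅ :=
    eq_empty_of_forall_notMem fun x hx => lt_irrefl (ρ x) (mem_iInter.1 hx (ρ x))
  rwa [hempty, Measure.restrict_empty, integral_zero_measure] at h

end WeightedIntegrals

section RKHSBall

variable {d : ℕ} {k : (Fin d → ℝ) → ℝ}

noncomputable def rkhsNormSq (k : (Fin d → ℝ) → ℝ) (g : (Fin d → ℝ) → ℂ) : ℝ :=
  ∫ ω, ‖g ω‖ ^ 2 / k ω

lemma rkhsNormSq_nonneg (hk_pos : ∀ᵐ ω ∂(volume : Measure (Fin d → ℝ)), 0 < k ω)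
    (g : (Fin d → ℝ) → ℂ) : 0 ≤ rkhsNormSq k g :=
  integral_nonneg_of_ae <| by
    filter_upwards [hk_pos] with ω hω using div_nonneg (sq_nonneg _) hω.le

variable (hk_int : Integrable k) (hk_pos : ∀ᵐ ω ∂(volume : Measure (Fin d → ℝ)), 0 < k ω)
include hk_int hk_pos

lemma integral_norm_le_of_rkhsNormSq_le {g : (Fin d → ℝ) → ℂ}
    (hgk : Integrable fun ω => ‖g ω‖ ^ 2 / k ω) {B : ℝ} (hgB : rkhsNormSq k g ≤ B) :
    ∫ ω, ‖g ω‖ ≤ (B + ∫ ω, k ω) / 2 := by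
  have h := setIntegral_norm_le_of_integrable_sq_div hk_int hk_pos hgk univ one_pos
  simp only [Measure.restrict_univ, one_mul, div_one] at h
  exact h.trans (by gcongr; exact hgB)

lemma exists_setIntegral_norm_lt_of_rkhsNormSq_le (B : ℝ) {η : ℝ} (hη : 0 < η) :
    ∃ R, 0 ≤ R ∧ ∀ g : (Fin d → ℝ) → ℂ, Integrable (fun ω => ‖g ω‖ ^ 2 / k ω) →
      rkhsNormSq k g ≤ B → ∫ ω in {ω | R < ‖ω‖}, ‖g ω‖ < η := by
  obtain ⟨t, ht, htB⟩ := exists_pos_mul_lt hη B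
  obtain ⟨R, hRk, hR⟩ := (((hk_int.tendsto_setIntegral_lt measurable_norm).eventually
    (gt_mem_nhds (mul_pos hη ht))).and (eventually_ge_atTop 0)).exists
  refine ⟨R, hR, fun g hgk hgB => ?_⟩
  have htail : (∫ ω in {ω | R < ‖ω‖}, k ω) / t < η := (div_lt_iff₀ ht).2 hRk
  calc ∫ ω in {ω | R < ‖ω‖}, ‖g ω‖
      ≤ (t * rkhsNormSq k g + (∫ ω in {ω | R < ‖ω‖}, k ω) / t) / 2 :=
        setIntegral_norm_le_of_integrable_sq_div hk_int hk_pos hgk _ ht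
    _ < η := by nlinarith

end RKHSBall

theorem uniformEquicontinuous_fourierRe {d : ℕ} {k : (Fin d → ℝ) → ℝ} (hk_int : Integrable k)
    (hk_pos : ∀ᵐ ω ∂(volume : Measure (Fin d → ℝ)), 0 < k ω) {ι : Type*}
    {G : ι → (Fin d → ℝ) → ℂ} (hG : ∀ i, Integrable (G i))
    (hGk : ∀ i, Integrable fun ω => ‖G i ω‖ ^ 2 / k ω) {B : ℝ}
    (hGB : ∀ i, rkhsNormSq k (G i) ≤ B) :
    UniformEquicontinuous fun i => fourierRe (G i) := by
  rw [Metric.uniformEquicontinuous_iff]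
  intro ε hε
  obtain ⟨R, hR, htail⟩ :=
    exists_setIntegral_norm_lt_of_rkhsNormSq_le hk_int hk_pos B (by positivity : 0 < ε / 4)
  obtain ⟨δ, hδ, hδR⟩ :=
    exists_pos_mul_lt (half_pos hε) (2 * π * d * R * ((B + ∫ ω, k ω) / 2))
  refine ⟨δ, hδ, fun z z' hzz' i => ?_⟩
  have hL1 := integral_norm_le_of_rkhsNormSq_le hk_int hk_pos (hGk i) (hGB i)
  have hlip : 2 * π * d * R * ‖z - z'‖ * (∫ ω, ‖G i ω‖) ≤
      2 * π * d * R * ((B + ∫ ω, k ω) / 2) * δ := by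
    rw [dist_eq_norm] at hzz'
    have : 0 ≤ ∫ ω, ‖G i ω‖ := integral_nonneg fun ω => norm_nonneg _
    calc 2 * π * d * R * ‖z - z'‖ * (∫ ω, ‖G i ω‖)
        ≤ 2 * π * d * R * δ * ((B + ∫ ω, k ω) / 2) := by gcongr
      _ = _ := by ring
  rw [Real.dist_eq]
  linarith [abs_fourierRe_sub_le (hG i) hR z z', htail (G i) (hGk i) (hGB i)]

lemma abs_sub_sq_sub_sub_sq_le {y u v M : ℝ} (hu : |u| ≤ M) (hv : |v| ≤ M) :
    |(y - u) ^ 2 - (y - v) ^ 2| ≤ |u - v| * (2 * |y| + 2 * M) := by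
  rw [show (y - u) ^ 2 - (y - v) ^ 2 = (u - v) * (u + v - 2 * y) by ring, abs_mul]
  gcongr
  calc |u + v - 2 * y| ≤ |u| + |v| + 2 * |y| := by
        refine (abs_sub _ _).trans ?_
        rw [abs_mul, abs_two]
        linarith [abs_add_le u v]
    _ ≤ 2 * |y| + 2 * M := by linarith

theorem uniformEquicontinuous_integral_sq_sub_comp_mul {E Ω ι : Type*}
    [NonUnitalNormedRing E] [MeasurableSpace E] [BorelSpace E] [MeasurableSpace Ω]
    {μ : Measure Ω} [IsFiniteMeasure μ] {F : ι → E → ℝ} (hF : UniformEquicontinuous F)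
    {M : ℝ} (hFM : ∀ i z, |F i z| ≤ M) {X : Ω → E} {Y : Ω → ℝ} (hX : Measurable X)
    (hY : Measurable Y) (hY2 : Integrable (fun p => Y p ^ 2) μ) :
    UniformEquicontinuous fun i (β : E) => ∫ p, (Y p - F i (β * X p)) ^ 2 ∂μ := by
  have hYL2 : MemLp Y 2 μ := (memLp_two_iff_integrable_sq hY.aestronglyMeasurable).2 hY2
  set G : Ω → ℝ := fun p => 2 * |Y p| + 2 * M
  have hG : Integrable G μ := ((hYL2.integrable one_le_two).abs.const_mul 2).add
    (integrable_const _)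
  have hFβ : ∀ i β, AEStronglyMeasurable (fun p => F i (β * X p)) μ := fun i β =>
    (((hF.uniformContinuous i).continuous.comp (continuous_const_mul β)).measurable.comp
      hX).aestronglyMeasurable
  have hrisk : ∀ i β, Integrable (fun p => (Y p - F i (β * X p)) ^ 2) μ := fun i β =>
    (hYL2.sub (MemLp.of_bound (hFβ i β) M
      (Eventually.of_forall fun p => (Real.norm_eq_abs _).trans_le (hFM i _)))).integrable_sq
  rw [Metric.uniformEquicontinuous_iff]
  intro ε hε
  obtain ⟨η, hη, hηG⟩ := exists_pos_mul_lt (half_pos hε) (∫ p, G p ∂μ)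
  obtain ⟨T, hTtail, hT⟩ := ((((hG.tendsto_setIntegral_lt hX.norm).const_mul (2 * M)).eventually
    (gt_mem_nhds (by rw [mul_zero]; exact half_pos hε))).and (eventually_ge_atTop 0)).exists
  obtain ⟨ρ, hρ, hρF⟩ := Metric.uniformEquicontinuous_iff.1 hF η hη
  obtain ⟨δ, hδ, hδT⟩ := exists_pos_mul_lt hρ T
  refine ⟨δ, hδ, fun β β' hββ' i => ?_⟩
  set S := {p | T < ‖X p‖}
  have hS : MeasurableSet S := measurableSet_lt measurable_const hX.norm
  have hpt : ∀ p, |(Y p - F i (β * X p)) ^ 2 - (Y p - F i (β' * X p)) ^ 2| ≤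
      η * G p + S.indicator (fun p => 2 * M * G p) p := by
    intro p
    refine (abs_sub_sq_sub_sub_sq_le (hFM i _) (hFM i _)).trans ?_
    have hG0 : 0 ≤ G p := by linarith [abs_nonneg (Y p), (abs_nonneg _).trans (hFM i 0)]
    by_cases hp : p ∈ S
    · rw [indicator_of_mem hp]
      have : |F i (β * X p) - F i (β' * X p)| ≤ 2 * M := by
        linarith [abs_sub (F i (β * X p)) (F i (β' * X p)), hFM i (β * X p), hFM i (β' * X p)]
      nlinarith
    · rw [indicator_of_notMem hp, add_zero]
      have hclose : dist (β * X p) (β' * X p) < ρ := by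
        rw [dist_eq_norm, ← sub_mul]
        calc ‖(β - β') * X p‖ ≤ ‖β - β'‖ * ‖X p‖ := norm_mul_le _ _
          _ ≤ δ * T := by
            rw [← dist_eq_norm]
            exact mul_le_mul hββ'.le (not_lt.1 hp) (norm_nonneg _) hδ.le
          _ < ρ := by linarith
      gcongr
      exact (Real.dist_eq _ _ ▸ hρF _ _ hclose i).le
  rw [Real.dist_eq, ← integral_sub (hrisk i β) (hrisk i β')]
  calc |∫ p, ((Y p - F i (β * X p)) ^ 2 - (Y p - F i (β' * X p)) ^ 2) ∂μ|
      ≤ ∫ p, (η * G p + S.indicator (fun p => 2 * M * G p) p) ∂μ :=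
        (abs_integral_le_integral_abs).trans <| integral_mono ((hrisk i β).sub (hrisk i β')).abs
          ((hG.const_mul η).add ((hG.const_mul (2 * M)).indicator hS)) hpt
    _ = (∫ p, G p ∂μ) * η + 2 * M * ∫ p in S, G p ∂μ := by
        rw [integral_add (hG.const_mul η) ((hG.const_mul (2 * M)).indicator hS),
          integral_const_mul, integral_indicator hS, integral_const_mul, mul_comm η]
    _ < ε := by linarith

lemma EquicontinuousAt.continuousAt_iInf {α ι : Type*} [TopologicalSpace α] [Nonempty ι]
    {F : ι → α → ℝ} {x₀ : α} (hF : EquicontinuousAt F x₀)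
    (hbdd : ∀ x, BddBelow (range fun i => F i x)) : ContinuousAt (fun x => ⨅ i, F i x) x₀ := by
  have hinf_le : ∀ x y {δ : ℝ}, (∀ i, F i x ≤ F i y + δ) → ⨅ i, F i x ≤ (⨅ i, F i y) + δ :=
    fun x y δ h => sub_le_iff_le_add.1 <| le_ciInf fun i =>
      sub_le_iff_le_add.2 <| (ciInf_le (hbdd x) i).trans (h i)
  rw [ContinuousAt, Metric.tendsto_nhds]
  intro ε hε
  filter_upwards [Metric.equicontinuousAt_iff_right.1 hF (ε / 2) (half_pos hε)] with x hx
  have hx' : ∀ i, |F i x₀ - F i x| < ε / 2 := fun i => Real.dist_eq _ _ ▸ hx i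
  rw [Real.dist_eq, abs_sub_lt_iff]
  constructor
  · linarith [hinf_le x x₀ (δ := ε / 2) fun i => by linarith [(abs_lt.1 (hx' i)).1]]
  · linarith [hinf_le x₀ x (δ := ε / 2) fun i => by linarith [(abs_lt.1 (hx' i)).2]]

lemma UniformEquicontinuous.add_const {ι β α : Type*} [UniformSpace β]
    [SeminormedAddCommGroup α] {F : ι → β → α} (hF : UniformEquicontinuous F) (c : ι → α) :
    UniformEquicontinuous fun i x => F i x + c i := by
  rw [Metric.uniformEquicontinuous_iff_right] at hF ⊢
  simpa only [dist_add_right] using hF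

section Objective

variable {d : ℕ} {Ω : Type} [MeasureSpace Ω] {k : (Fin d → ℝ) → ℝ}

def IsAdmissible (k : (Fin d → ℝ) → ℝ) (g : (Fin d → ℝ) → ℂ) : Prop :=
  Integrable g ∧ (∀ ω, g (-ω) = starRingEnd ℂ (g ω)) ∧ Integrable fun ω => ‖g ω‖ ^ 2 / k ω

noncomputable def krrObjective (k : (Fin d → ℝ) → ℝ) (X : Ω → Fin d → ℝ) (Y : Ω → ℝ)
    (β : Fin d → ℝ) (lam : ℝ) (g : (Fin d → ℝ) → ℂ) : ℝ :=
  (∫ p, (Y p - fourierRe g (β * X p)) ^ 2) + lam * rkhsNormSq k g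

lemma zero_isAdmissible_and_rkhsNormSq_le {B : ℝ} (hB : 0 ≤ B) :
    IsAdmissible k 0 ∧ rkhsNormSq k 0 ≤ B :=
  ⟨⟨integrable_zero _ _ _, by simp, by simp⟩, by simpa [rkhsNormSq] using hB⟩

lemma krrObjective_zero (X : Ω → Fin d → ℝ) (Y : Ω → ℝ) (β : Fin d → ℝ) (lam : ℝ) :
    krrObjective k X Y β lam 0 = ∫ p, Y p ^ 2 := by
  simp [krrObjective, fourierRe, rkhsNormSq]

lemma krrObjective_nonneg (hk_pos : ∀ᵐ ω ∂(volume : Measure (Fin d → ℝ)), 0 < k ω)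
    (X : Ω → Fin d → ℝ) (Y : Ω → ℝ) (β : Fin d → ℝ) {lam : ℝ} (hlam : 0 ≤ lam)
    (g : (Fin d → ℝ) → ℂ) : 0 ≤ krrObjective k X Y β lam g :=
  add_nonneg (integral_nonneg fun _ => sq_nonneg _) (mul_nonneg hlam (rkhsNormSq_nonneg hk_pos g))

theorem Jobj_eq_iInf (hk_pos : ∀ᵐ ω ∂(volume : Measure (Fin d → ℝ)), 0 < k ω)
    (X : Ω → Fin d → ℝ) (Y : Ω → ℝ) (β : Fin d → ℝ) {lam B : ℝ} (hlam : 0 ≤ lam) (hB : 0 ≤ B)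
    (hYB : ∫ p, Y p ^ 2 ≤ lam * B) :
    Jobj k X Y β lam =
      ⨅ g : {g // IsAdmissible k g ∧ rkhsNormSq k g ≤ B}, krrObjective k X Y β lam g := by
  have hzero := zero_isAdmissible_and_rkhsNormSq_le (k := k) hB
  have : Nonempty {g // IsAdmissible k g ∧ rkhsNormSq k g ≤ B} := ⟨⟨0, hzero⟩⟩
  have hbdd : BddBelow (range fun g : {g // IsAdmissible k g ∧ rkhsNormSq k g ≤ B} =>
      krrObjective k X Y β lam g) :=
    ⟨0, forall_mem_range.2 fun g => krrObjective_nonneg hk_pos X Y β hlam g⟩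
  refine le_antisymm (le_ciInf fun g => csInf_le ⟨0, ?_⟩ ⟨g.1, g.2.1.1, g.2.1.2.1, g.2.1.2.2, rfl⟩)
    (le_csInf ⟨_, 0, hzero.1.1, hzero.1.2.1, hzero.1.2.2, rfl⟩ ?_)
  · rintro _ ⟨g, -, -, -, rfl⟩
    exact krrObjective_nonneg hk_pos X Y β hlam g
  · rintro _ ⟨g, hg, hsym, hgk, rfl⟩
    by_cases hgB : rkhsNormSq k g ≤ B
    · exact ciInf_le hbdd ⟨g, ⟨hg, hsym, hgk⟩, hgB⟩
    · calc ⨅ g : {g // IsAdmissible k g ∧ rkhsNormSq k g ≤ B}, krrObjective k X Y β lam g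
          ≤ krrObjective k X Y β lam 0 := ciInf_le hbdd ⟨0, hzero⟩
        _ ≤ lam * rkhsNormSq k g := by
          rw [krrObjective_zero]
          exact hYB.trans (mul_le_mul_of_nonneg_left (not_le.1 hgB).le hlam)
        _ ≤ krrObjective k X Y β lam g :=
          le_add_of_nonneg_left (integral_nonneg fun _ => sq_nonneg _)

end Objective

theorem stmt9_general {d : ℕ}
    (k : (Fin d → ℝ) → ℝ) (hk_int : Integrable k)
    (hk_pos : ∀ᵐ ω ∂(volume : Measure (Fin d → ℝ)), 0 < k ω)
    {Ω : Type} [MeasureSpace Ω] [IsProbabilityMeasure (volume : Measure Ω)]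
    (X : Ω → Fin d → ℝ) (Y : Ω → ℝ) (hX : Measurable X) (hY : Measurable Y)
    (hY2 : Integrable (fun p => (Y p) ^ 2) volume)
    (lam : ℝ) (hlam : 0 < lam) :
    Continuous (fun β : Fin d → ℝ => Jobj k X Y β lam) := by
  set B := (∫ p, Y p ^ 2) / lam
  have hB : 0 ≤ B := div_nonneg (integral_nonneg fun _ => sq_nonneg _) hlam.le
  have hYB : ∫ p, Y p ^ 2 ≤ lam * B := (mul_div_cancel₀ _ hlam.ne').ge
  let ι := {g // IsAdmissible k g ∧ rkhsNormSq k g ≤ B}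
  have : Nonempty ι := ⟨⟨0, zero_isAdmissible_and_rkhsNormSq_le hB⟩⟩
  have hfeatures : UniformEquicontinuous fun g : ι => fourierRe g.1 :=
    uniformEquicontinuous_fourierRe hk_int hk_pos (fun g => g.2.1.1) (fun g => g.2.1.2.2)
      (fun g => g.2.2)
  have hobjective : Equicontinuous fun (g : ι) β => krrObjective k X Y β lam g :=
    ((uniformEquicontinuous_integral_sq_sub_comp_mul hfeatures
      (fun g z => (abs_fourierRe_le g.1 z).trans
        (integral_norm_le_of_rkhsNormSq_le hk_int hk_pos g.2.1.2.2 g.2.2))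
      hX hY hY2).add_const fun g => lam * rkhsNormSq k g.1).equicontinuous
  simp_rw [Jobj_eq_iInf hk_pos X Y _ hlam.le hB hYB]
  exact continuous_iff_continuousAt.2 fun β => (hobjective β).continuousAt_iInf fun β =>
    ⟨0, forall_mem_range.2 fun g => krrObjective_nonneg hk_pos X Y β hlam.le g⟩

/-- for every `λ > 0`, the map `β ↦ 𝒥(β, λ)` is continuous on `ℝᵈ`. -/
theorem stmt9 {d : ℕ} (hd : 1 ≤ d)
    (k : (Fin d → ℝ) → ℝ) (hk_int : Integrable k)
    (hk_even : ∀ ω, k (-ω) = k ω)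
    (hk_pos : ∀ᵐ ω ∂(volume : Measure (Fin d → ℝ)), 0 < k ω)
    (hk_one : ∫ ω : Fin d → ℝ, k ω = 1)
    {Ω : Type} [MeasureSpace Ω] [IsProbabilityMeasure (volume : Measure Ω)]
    (X : Ω → Fin d → ℝ) (Y : Ω → ℝ) (hX : Measurable X) (hY : Measurable Y)
    (hY2 : Integrable (fun p => (Y p) ^ 2) volume)
    (lam : ℝ) (hlam : 0 < lam) :
    Continuous (fun β : Fin d → ℝ => Jobj k X Y β lam) :=
  stmt9_general k hk_int hk_pos X Y hX hY hY2 lam hlam
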